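/- Let p be a prime and let G be the GGS-group over the p-adic tree with constant defining vector e = (1, 1, ..., 1). Then G is strongly fractal but not super strongly fractal. -/

import Mathlib

open Equiv

theorem Equiv.Perm.apply_inv_self {α : Type*} (f : Equiv.Perm α) (x : α) : f (f⁻¹ x) = x :=
  f.apply_symm_apply x

namespace TreeFract

variable {X : Type*}

/-- The automorphism group of the rooted `d`-adic tree with vertex set the free
monoid `List X`: permutations of the vertex set fixing the root and sending
children of a vertex to children of its image (this is exactly incidence
preservation for the rooted tree). -/
def AutT (X : Type*) : Subgroup (Equiv.Perm (List X)) where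
  carrier := {g | g [] = [] ∧ ∀ (u : List X) (x : X), ∃ y : X, g (u ++ [x]) = g u ++ [y]}
  one_mem' := ⟨rfl, fun _ x => ⟨x, rfl⟩⟩
  mul_mem' := by
    rintro f g ⟨hf1, hf2⟩ ⟨hg1, hg2⟩
    refine ⟨?_, fun u x => ?_⟩
    · show f (g []) = []
      rw [hg1, hf1]
    · obtain ⟨y, hy⟩ := hg2 u x
      obtain ⟨z, hz⟩ := hf2 (g u) y
      exact ⟨z, by show f (g (u ++ [x])) = f (g u) ++ [z]; rw [hy, hz]⟩
  inv_mem' := by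
    rintro g ⟨hg1, hg2⟩
    have hinj := g.injective
    refine ⟨?_, fun u x => ?_⟩
    · apply hinj
      show g (g⁻¹ []) = g []
      rw [Equiv.Perm.apply_inv_self, hg1]
    · have hne : g⁻¹ (u ++ [x]) ≠ [] := by
        intro h
        have h2 : u ++ [x] = g [] := by
          conv_lhs => rw [← Equiv.Perm.apply_inv_self g (u ++ [x]), h]
        rw [hg1] at h2
        simp at h2
      obtain ⟨y, hy⟩ : ∃ y, g⁻¹ (u ++ [x]) = (g⁻¹ (u ++ [x])).dropLast ++ [y] :=
        ⟨(g⁻¹ (u ++ [x])).getLast hne, (List.dropLast_append_getLast hne).symm⟩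
      obtain ⟨z, hz⟩ := hg2 ((g⁻¹ (u ++ [x])).dropLast) y
      have happ : g ((g⁻¹ (u ++ [x])).dropLast) ++ [z] = u ++ [x] := by
        rw [← hz, ← hy, Equiv.Perm.apply_inv_self]
      have h2 : g ((g⁻¹ (u ++ [x])).dropLast) = u ∧ ([z] : List X) = [x] :=
        List.append_inj' happ rfl
      refine ⟨y, ?_⟩
      rw [hy]
      congr 1
      apply hinj
      rw [Equiv.Perm.apply_inv_self, h2.1]

/-- The underlying function of the section of `g` at the vertex `u`. -/
def sectFun (g : Equiv.Perm (List X)) (u : List X) : List X → List X :=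
  fun v => (g (u ++ v)).drop (g u).length

open scoped Classical in
/-- The section `g_u` of a tree automorphism `g` at a vertex `u`, i.e. the unique
automorphism with `g (u ++ v) = g u ++ g_u v` for all `v`.  (By convention it is
the identity for permutations which are not tree automorphisms.) -/
noncomputable def sect (g : Equiv.Perm (List X)) (u : List X) : Equiv.Perm (List X) :=
  if h : Function.Bijective (sectFun g u) then Equiv.ofBijective _ h else 1

/-- The underlying function of the label of `g` at the vertex `u`. -/
def labelFun (g : Equiv.Perm (List X)) (u : List X) : X → X :=
  fun x => (g (u ++ [x])).getLastD x

open scoped Classical in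
/-- The label `g_(u)` of a tree automorphism `g` at a vertex `u`: the permutation
of `X` with `g (u ++ [x]) = g u ++ [g_(u) x]`.  (By convention it is the identity
for permutations which are not tree automorphisms.) -/
noncomputable def label (g : Equiv.Perm (List X)) (u : List X) : Equiv.Perm X :=
  if h : Function.Bijective (labelFun g u) then Equiv.ofBijective _ h else 1

/-- The stabilizer `st_G(u)` of the vertex `u` in `G`. -/
def stV (G : Subgroup (Equiv.Perm (List X))) (u : List X) : Subgroup (Equiv.Perm (List X)) where
  carrier := {g | g ∈ G ∧ g u = u}
  one_mem' := ⟨one_mem G, rfl⟩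
  mul_mem' := by
    rintro f g ⟨hf, hf2⟩ ⟨hg, hg2⟩
    exact ⟨mul_mem hf hg, by show f (g u) = u; rw [hg2, hf2]⟩
  inv_mem' := by
    rintro g ⟨hg, hg2⟩
    refine ⟨inv_mem hg, ?_⟩
    apply g.injective
    show g (g⁻¹ u) = g u
    rw [Equiv.Perm.apply_inv_self, hg2]

/-- The stabilizer `st_G(L_n)` of the `n`-th level in `G`. -/
def stL (G : Subgroup (Equiv.Perm (List X))) (n : ℕ) : Subgroup (Equiv.Perm (List X)) where
  carrier := {g | g ∈ G ∧ ∀ u : List X, u.length = n → g u = u}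
  one_mem' := ⟨one_mem G, fun _ _ => rfl⟩
  mul_mem' := by
    rintro f g ⟨hf, hf2⟩ ⟨hg, hg2⟩
    exact ⟨mul_mem hf hg, fun u hu => by show f (g u) = u; rw [hg2 u hu, hf2 u hu]⟩
  inv_mem' := by
    rintro g ⟨hg, hg2⟩
    refine ⟨inv_mem hg, fun u hu => ?_⟩
    apply g.injective
    show g (g⁻¹ u) = g u
    rw [Equiv.Perm.apply_inv_self, hg2 u hu]

/-- `G` is self-similar: sections of elements of `G` lie in `G`. -/
def SelfSimilar (G : Subgroup (Equiv.Perm (List X))) : Prop :=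
  ∀ g ∈ G, ∀ u : List X, sect g u ∈ G

/-- `G` acts transitively on the first level of the tree. -/
def FirstLevelTransitive (G : Subgroup (Equiv.Perm (List X))) : Prop :=
  ∀ x y : X, ∃ g ∈ G, g [x] = [y]

/-- `G` is level transitive: it acts transitively on every level of the tree. -/
def LevelTransitive (G : Subgroup (Equiv.Perm (List X))) : Prop :=
  ∀ (n : ℕ) (u v : List X), u.length = n → v.length = n → ∃ g ∈ G, g u = v

/-- `G` is fractal: `ψ_u(st_G(u)) = G` for every vertex `u`. -/
def Fractal (G : Subgroup (Equiv.Perm (List X))) : Prop :=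
  ∀ u : List X,
    (fun g => sect g u) '' (stV G u : Set (Equiv.Perm (List X))) = (G : Set (Equiv.Perm (List X)))

/-- `G` is strongly fractal: `ψ_x(st_G(L_1)) = G` for every first-level vertex `x`. -/
def StronglyFractal (G : Subgroup (Equiv.Perm (List X))) : Prop :=
  ∀ x : X,
    (fun g => sect g [x]) '' (stL G 1 : Set (Equiv.Perm (List X))) = (G : Set (Equiv.Perm (List X)))

/-- `G` is super strongly fractal: `ψ_u(st_G(L_n)) = G` for every `n` and every `u ∈ L_n`. -/
def SuperStronglyFractal (G : Subgroup (Equiv.Perm (List X))) : Prop :=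
  ∀ (n : ℕ) (u : List X), u.length = n →
    (fun g => sect g u) '' (stL G n : Set (Equiv.Perm (List X))) = (G : Set (Equiv.Perm (List X)))

/-- The normal closure `⟨S⟩^G` of a subset `S ⊆ G` in the subgroup `G`, realized as a
subgroup of the ambient group: the subgroup generated by all `G`-conjugates of `S`. -/
def normalClosureIn (G : Subgroup (Equiv.Perm (List X))) (S : Set (Equiv.Perm (List X))) :
    Subgroup (Equiv.Perm (List X)) :=
  Subgroup.closure {t | ∃ g ∈ G, ∃ s ∈ S, t = g * s * g⁻¹}

end TreeFract
namespace TreeFract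

/-! ### The Hanoi towers generators -/

section Hanoi

variable {d : ℕ}

/-- The underlying function of the automorphism `a_{ij}` of the Hanoi Towers group:
it swaps the first occurrence of `i` or `j` in a word. -/
def hanoiFun (i j : Fin d) : List (Fin d) → List (Fin d)
  | [] => []
  | x :: w => if x = i then j :: w else if x = j then i :: w else x :: hanoiFun i j w

lemma hanoiFun_invol (i j : Fin d) : ∀ w, hanoiFun i j (hanoiFun i j w) = w
  | [] => rfl
  | x :: w => by
    by_cases h1 : x = i
    · subst h1
      by_cases h2 : j = x
      · simp [hanoiFun, h2]
      · simp [hanoiFun, h2]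
    · by_cases h2 : x = j
      · subst h2
        simp [hanoiFun, h1]
      · simp [hanoiFun, h1, h2, hanoiFun_invol i j w]

/-- The automorphism `a_{ij}` of the `d`-adic tree: its label at the root is the
transposition `(x_i x_j)`, its sections at the first-level vertices `x_i` and `x_j`
are trivial and all its other first-level sections equal `a_{ij}` again. -/
def hanoiA (i j : Fin d) : Equiv.Perm (List (Fin d)) :=
  ⟨hanoiFun i j, hanoiFun i j, hanoiFun_invol i j, hanoiFun_invol i j⟩

end Hanoi

/-- The generator `b_i = a_{i,i+1}` (here `i` runs through `0, …, d-2`,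
corresponding to the paper's `b_1, …, b_{d-1}`). -/
def hanoiB (d : ℕ) (i : ℕ) (h : i + 1 < d) : Equiv.Perm (List (Fin d)) :=
  hanoiA ⟨i, Nat.lt_of_succ_lt h⟩ ⟨i + 1, h⟩

/-- The subgroup `G = ⟨b_1, …, b_{d-1}⟩` of the Hanoi Towers group. -/
def hanoiGroup (d : ℕ) : Subgroup (Equiv.Perm (List (Fin d))) :=
  Subgroup.closure {g | ∃ (i : ℕ) (h : i + 1 < d), g = hanoiB d i h}

/-! ### GGS groups (and the rooted automorphism `a`) -/

section GGS

variable {p : ℕ}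

/-- The function adding `m` to the first letter of a word over `ZMod p`. -/
def rotFun (m : ZMod p) : List (ZMod p) → List (ZMod p)
  | [] => []
  | x :: w => (x + m) :: w

/-- The rooted automorphism of the `p`-adic tree whose label at the root is the
`p`-cycle `x ↦ x + m`; for `m = 1` this is the generator `a` of a GGS-group
(identifying `x_i` with `i mod p`). -/
def rotPerm (m : ZMod p) : Equiv.Perm (List (ZMod p)) :=
  ⟨rotFun m, rotFun (-m),
    by intro w; cases w <;> simp [rotFun],
    by intro w; cases w <;> simp [rotFun]⟩

/-- The underlying function of the GGS generator `b` with defining vector `e`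
(the value `e 0` is irrelevant; `e i` for `i ≠ 0` are the coordinates
`e_1, …, e_{p-1}`): `b` fixes the first level, its section at `x_i` is
`a^{e_i}` for `i = 1, …, p-1` and its section at `x_p` (identified with `0`)
is `b` again. -/
def ggsFun (e : ZMod p → ZMod p) : List (ZMod p) → List (ZMod p)
  | [] => []
  | x :: w => if x = 0 then x :: ggsFun e w else x :: rotFun (e x) w

lemma ggsFun_inv (e : ZMod p → ZMod p) : ∀ w, ggsFun (fun i => -(e i)) (ggsFun e w) = w
  | [] => rfl
  | x :: w => by
    by_cases h : x = 0
    · simp only [ggsFun, if_pos h]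
      rw [ggsFun_inv e w]
    · simp only [ggsFun, if_neg h]
      cases w <;> simp [rotFun]

/-- The GGS generator `b` with defining vector `e`, as a tree automorphism. -/
def ggsB (e : ZMod p → ZMod p) : Equiv.Perm (List (ZMod p)) :=
  ⟨ggsFun e, ggsFun (fun i => -(e i)), ggsFun_inv e, by
    intro w
    have h := ggsFun_inv (fun i => -(e i)) w
    simpa using h⟩

end GGS

/-- The GGS-group `G = ⟨a, b⟩` over the `p`-adic tree with defining vector `e`. -/
def ggsGroup (p : ℕ) (e : ZMod p → ZMod p) : Subgroup (Equiv.Perm (List (ZMod p))) :=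
  Subgroup.closure {rotPerm 1, ggsB e}

/-! ### The first Grigorchuk group -/

/-- The three directed generators `b, c, d` (for `k % 3 = 0, 1, 2` respectively) of the
first Grigorchuk group, defined by the mutual recursion
`b = (a, c)`, `c = (a, d)`, `d = (1, b)` (identifying `x_1` with `0` and `x_2` with `1`). -/
def griFun : ℕ → List (ZMod 2) → List (ZMod 2)
  | _, [] => []
  | k, x :: w => if x = 0 then (if k % 3 = 2 then x :: w else x :: rotFun 1 w)
                 else x :: griFun (k + 1) w

lemma griFun_invol : ∀ (w : List (ZMod 2)) (k : ℕ), griFun k (griFun k w) = w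
  | [], _ => rfl
  | x :: w, k => by
    by_cases h : x = 0
    · by_cases h3 : k % 3 = 2
      · simp [griFun, h, h3]
      · simp only [griFun, if_pos h, if_neg h3]
        cases w with
        | nil => rfl
        | cons y v =>
            have hy : y + 1 + 1 = y := by
              rw [add_assoc]
              simp [show (1 : ZMod 2) + 1 = 0 from rfl]
            simp [rotFun, hy]
    · simp only [griFun, if_neg h]
      rw [griFun_invol w (k + 1)]

/-- The generator `b` of the first Grigorchuk group, with sections `(a, c)`. -/
def griB : Equiv.Perm (List (ZMod 2)) :=
  ⟨griFun 0, griFun 0, fun w => griFun_invol w 0, fun w => griFun_invol w 0⟩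

/-- The generator `c` of the first Grigorchuk group, with sections `(a, d)`. -/
def griC : Equiv.Perm (List (ZMod 2)) :=
  ⟨griFun 1, griFun 1, fun w => griFun_invol w 1, fun w => griFun_invol w 1⟩

/-- The generator `d` of the first Grigorchuk group, with sections `(1, b)`. -/
def griD : Equiv.Perm (List (ZMod 2)) :=
  ⟨griFun 2, griFun 2, fun w => griFun_invol w 2, fun w => griFun_invol w 2⟩

/-- The first Grigorchuk group `𝒢 = ⟨a, b, c, d⟩` acting on the binary tree. -/
def grigorchukGroup : Subgroup (Equiv.Perm (List (ZMod 2))) :=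
  Subgroup.closure {rotPerm 1, griB, griC, griD}

end TreeFract

/-!
Let `aExp g` be the rotation by which `g ∈ G` acts on the first level and
`bExp g = -∑ₓ aExp g_x`; both are homomorphisms `G → ℤ/p`, vanishing at `b` and `a` respectively.
For a constant defining vector `(c, …, c)` one has `bExp b = -(p - 1) c = c`, and checking the
generators shows `aExp g_x + bExp g_x = bExp g` for all `g ∈ G`. If `g ∈ st_G(L_2)`, every
`aExp g_x` vanishes, so `bExp g = 0`, hence `bExp g_x = 0` and `aExp g_{xy} + bExp g_{xy} = 0`.
As `aExp b + bExp b = c ≠ 0`, no element of `st_G(L_2)` has section `b` at a vertex of `L_2`.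

For strong fractality, the conjugates `b^{a^k}` fix the first level and their sections at `x` are
`b` and the powers `a^{e_i}`, which generate `G` as soon as some `e_i ≠ 0`.
-/

namespace TreeFract

section Sections

variable {X : Type*} {f g : Perm (List X)}

lemma exists_apply_singleton (hg : g ∈ AutT X) (x : X) : ∃ y, g [x] = [y] := by
  simpa [hg.1] using hg.2 [] x

lemma apply_append_eq_sectFun (hg : g ∈ AutT X) (u v : List X) :
    g (u ++ v) = g u ++ sectFun g u v := by
  obtain ⟨w, hw⟩ : ∃ w, g (u ++ v) = g u ++ w := by
    induction v using List.reverseRecOn with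
    | nil => exact ⟨[], by simp⟩
    | append_singleton v x ih =>
      obtain ⟨w, hw⟩ := ih
      obtain ⟨y, hy⟩ := hg.2 (u ++ v) x
      exact ⟨w ++ [y], by rw [← List.append_assoc, hy, hw, List.append_assoc]⟩
  simp only [sectFun, hw, List.drop_left]

lemma sectFun_inv_apply_sectFun (hg : g ∈ AutT X) (u v : List X) :
    sectFun g⁻¹ (g u) (sectFun g u v) = v := by
  have h := apply_append_eq_sectFun (inv_mem hg) (g u) (sectFun g u v)
  rw [← apply_append_eq_sectFun hg] at h
  simp only [Perm.coe_inv, symm_apply_apply] at h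
  exact (List.append_cancel_left h).symm

lemma sectFun_bijective (hg : g ∈ AutT X) (u : List X) : Function.Bijective (sectFun g u) := by
  refine Function.bijective_iff_has_inverse.2
    ⟨sectFun g⁻¹ (g u), sectFun_inv_apply_sectFun hg u, fun w => ?_⟩
  simpa using sectFun_inv_apply_sectFun (inv_mem hg) (g u) w

lemma apply_append (hg : g ∈ AutT X) (u v : List X) : g (u ++ v) = g u ++ sect g u v := by
  rw [sect, dif_pos (sectFun_bijective hg u), Equiv.ofBijective_apply,
    apply_append_eq_sectFun hg]

lemma sect_apply_eq_iff (hg : g ∈ AutT X) {u v w : List X} :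
    sect g u v = w ↔ g (u ++ v) = g u ++ w := by
  rw [apply_append hg, List.append_cancel_left_eq]

lemma sect_one (u : List X) : sect (1 : Perm (List X)) u = 1 :=
  Equiv.ext fun _ => (sect_apply_eq_iff (one_mem _)).2 rfl

lemma sect_nil (hg : g ∈ AutT X) : sect g [] = g :=
  Equiv.ext fun v => (sect_apply_eq_iff hg).2 (by simp [hg.1])

lemma sect_mul (hf : f ∈ AutT X) (hg : g ∈ AutT X) (u : List X) :
    sect (f * g) u = sect f (g u) * sect g u :=
  Equiv.ext fun v => (sect_apply_eq_iff (mul_mem hf hg)).2 <| by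
    simp only [Perm.mul_apply, apply_append hg, apply_append hf]

lemma sect_inv (hg : g ∈ AutT X) (u : List X) : sect g⁻¹ u = (sect g (g⁻¹ u))⁻¹ := by
  have h := sect_mul hg (inv_mem hg) u
  rw [mul_inv_cancel, sect_one] at h
  exact eq_inv_of_mul_eq_one_right h.symm

lemma sect_mem_AutT (hg : g ∈ AutT X) (u : List X) : sect g u ∈ AutT X := by
  refine ⟨(sect_apply_eq_iff hg).2 (by simp), fun w x => ?_⟩
  obtain ⟨y, hy⟩ := hg.2 (u ++ w) x
  refine ⟨y, (sect_apply_eq_iff hg).2 ?_⟩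
  rw [← List.append_assoc, hy, apply_append hg u w, List.append_assoc]

lemma sect_append (hg : g ∈ AutT X) (u v : List X) :
    sect g (u ++ v) = sect (sect g u) v :=
  Equiv.ext fun w => (sect_apply_eq_iff hg).2 <| by
    rw [apply_append hg u v, List.append_assoc, List.append_assoc, apply_append hg u,
      apply_append (sect_mem_AutT hg u)]

lemma apply_singleton_of_fix_level_two (hg : g ∈ AutT X) (h2 : ∀ x y, g [x, y] = [x, y])
    (x y : X) : g [x] = [x] ∧ sect g [x] [y] = [y] := by
  obtain ⟨z, hz⟩ := exists_apply_singleton hg x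
  have h := apply_append hg [x] [y]
  rw [List.singleton_append, h2, hz, List.singleton_append, List.cons.injEq] at h
  obtain ⟨rfl, h⟩ := h
  exact ⟨hz, h.symm⟩

end Sections

section SelfSimilarity

variable {X : Type*}

def withSectionsIn (G : Subgroup (Perm (List X))) : Subgroup (Perm (List X)) where
  carrier := {g | g ∈ AutT X ∧ ∀ u, sect g u ∈ G}
  one_mem' := ⟨one_mem _, fun u => by rw [sect_one]; exact one_mem G⟩
  mul_mem' := fun ⟨hf, hf'⟩ ⟨hg, hg'⟩ =>
    ⟨mul_mem hf hg, fun u => by rw [sect_mul hf hg]; exact mul_mem (hf' _) (hg' _)⟩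
  inv_mem' := fun ⟨hg, hg'⟩ =>
    ⟨inv_mem hg, fun u => by rw [sect_inv hg]; exact inv_mem (hg' _)⟩

lemma closure_le_AutT_and_selfSimilar {S : Set (Perm (List X))}
    (hS : ∀ s ∈ S, s ∈ AutT X ∧ ∀ u, sect s u ∈ Subgroup.closure S) :
    Subgroup.closure S ≤ AutT X ∧ SelfSimilar (Subgroup.closure S) := by
  have h : Subgroup.closure S ≤ withSectionsIn (Subgroup.closure S) :=
    (Subgroup.closure_le _).2 hS
  exact ⟨fun g hg => (h hg).1, fun g hg u => (h hg).2 u⟩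

noncomputable def sectHom {H : Subgroup (Perm (List X))} (hH : H ≤ AutT X) (u : List X)
    (hu : ∀ h ∈ H, h u = u) : H →* Perm (List X) where
  toFun h := sect h u
  map_one' := sect_one u
  map_mul' f g := by
    simp only [Subgroup.coe_mul, sect_mul (hH f.2) (hH g.2), hu g g.2]

lemma image_sect_eq_range {H : Subgroup (Perm (List X))} (hH : H ≤ AutT X) (u : List X)
    (hu : ∀ h ∈ H, h u = u) :
    (fun g => sect g u) '' (H : Set (Perm (List X))) = (sectHom hH u hu).range := by
  ext g
  simp [sectHom]

lemma stronglyFractal_closure {S : Set (Perm (List X))} (hA : Subgroup.closure S ≤ AutT X)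
    (hss : SelfSimilar (Subgroup.closure S))
    (hS : ∀ x, S ⊆ Subgroup.closure
      ((fun g => sect g [x]) '' (stL (Subgroup.closure S) 1 : Set (Perm (List X))))) :
    StronglyFractal (Subgroup.closure S) := by
  intro x
  have hH : stL (Subgroup.closure S) 1 ≤ AutT X := fun g hg => hA hg.1
  have hx : ∀ h ∈ stL (Subgroup.closure S) 1, h [x] = [x] := fun h hh => hh.2 [x] rfl
  have hS' := hS x
  rw [image_sect_eq_range hH [x] hx, Subgroup.closure_eq] at hS'
  rw [image_sect_eq_range hH [x] hx]
  refine congrArg _ (le_antisymm ?_ ((Subgroup.closure_le _).2 hS'))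
  rintro _ ⟨⟨g, hg⟩, rfl⟩
  exact hss g hg.1 [x]

end SelfSimilarity

section Generators

variable {p : ℕ}

@[simp] lemma rotPerm_cons (m x : ZMod p) (w : List (ZMod p)) :
    rotPerm m (x :: w) = (x + m) :: w := rfl

lemma rotPerm_mul (m m' : ZMod p) : rotPerm m * rotPerm m' = rotPerm (m + m') :=
  Equiv.ext fun w => by cases w <;> simp [rotPerm, rotFun, add_assoc, add_comm m]

lemma rotPerm_zero : rotPerm (0 : ZMod p) = 1 :=
  Equiv.ext fun w => by cases w <;> simp [rotPerm, rotFun]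

lemma rotPerm_pow (m : ZMod p) (n : ℕ) : rotPerm m ^ n = rotPerm (n • m) := by
  induction n with
  | zero => rw [pow_zero, zero_smul, rotPerm_zero]
  | succ n ih => rw [pow_succ, ih, rotPerm_mul, succ_nsmul]

lemma rotPerm_inv (m : ZMod p) : (rotPerm m)⁻¹ = rotPerm (-m) :=
  inv_eq_of_mul_eq_one_right (by rw [rotPerm_mul, add_neg_cancel, rotPerm_zero])

lemma rotPerm_mem_AutT (m : ZMod p) : rotPerm m ∈ AutT (ZMod p) := by
  refine ⟨rfl, fun u x => ?_⟩
  cases u with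
  | nil => exact ⟨x + m, rfl⟩
  | cons z w => exact ⟨x, rfl⟩

lemma sect_rotPerm_cons (m x : ZMod p) (w : List (ZMod p)) : sect (rotPerm m) (x :: w) = 1 :=
  Equiv.ext fun _ => (sect_apply_eq_iff (rotPerm_mem_AutT m)).2 rfl

lemma ggsB_mem_AutT (e : ZMod p → ZMod p) : ggsB e ∈ AutT (ZMod p) := by
  refine ⟨rfl, fun u x => ?_⟩
  show ∃ y, ggsFun e (u ++ [x]) = ggsFun e u ++ [y]
  induction u with
  | nil => exact ⟨x, by by_cases h : x = 0 <;> simp [ggsFun, h, rotFun]⟩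
  | cons z w ih =>
    by_cases h : z = 0
    · obtain ⟨y, hy⟩ := ih
      exact ⟨y, by simp [ggsFun, h, hy]⟩
    · cases w with
      | nil => exact ⟨x + e z, by simp [ggsFun, h, rotFun]⟩
      | cons c w => exact ⟨x, by simp [ggsFun, h, rotFun]⟩

lemma ggsB_singleton (e : ZMod p → ZMod p) (x : ZMod p) : ggsB e [x] = [x] := by
  show ggsFun e [x] = [x]
  by_cases h : x = 0 <;> simp [ggsFun, h, rotFun]

lemma sect_ggsB_zero (e : ZMod p → ZMod p) : sect (ggsB e) [0] = ggsB e :=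
  Equiv.ext fun v => (sect_apply_eq_iff (ggsB_mem_AutT e)).2 <| by
    rw [ggsB_singleton]
    simp [ggsB, ggsFun]

lemma sect_ggsB_of_ne_zero (e : ZMod p → ZMod p) {x : ZMod p} (hx : x ≠ 0) :
    sect (ggsB e) [x] = rotPerm (e x) :=
  Equiv.ext fun v => (sect_apply_eq_iff (ggsB_mem_AutT e)).2 <| by
    rw [ggsB_singleton]
    simp [ggsB, ggsFun, hx, rotPerm]

end Generators

section GGSGroup

variable {p : ℕ} {e : ZMod p → ZMod p} {f g : Perm (List (ZMod p))}

lemma rotPerm_mem_ggsGroup [NeZero p] (e : ZMod p → ZMod p) (m : ZMod p) :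
    rotPerm m ∈ ggsGroup p e := by
  have h := pow_mem (Subgroup.subset_closure (Or.inl rfl) : rotPerm 1 ∈ ggsGroup p e) m.val
  rwa [rotPerm_pow, nsmul_one, ZMod.natCast_zmod_val] at h

lemma ggsB_mem_ggsGroup (e : ZMod p → ZMod p) : ggsB e ∈ ggsGroup p e :=
  Subgroup.subset_closure (Or.inr rfl)

lemma sect_ggsB_mem_ggsGroup [NeZero p] (e : ZMod p → ZMod p) (u : List (ZMod p)) :
    sect (ggsB e) u ∈ ggsGroup p e := by
  induction u with
  | nil => rw [sect_nil (ggsB_mem_AutT e)]; exact ggsB_mem_ggsGroup e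
  | cons x w ih =>
    rw [← List.singleton_append, sect_append (ggsB_mem_AutT e)]
    by_cases hx : x = 0
    · rwa [hx, sect_ggsB_zero]
    · rw [sect_ggsB_of_ne_zero e hx]
      cases w with
      | nil => rw [sect_nil (rotPerm_mem_AutT _)]; exact rotPerm_mem_ggsGroup e _
      | cons z v => rw [sect_rotPerm_cons]; exact one_mem _

lemma ggsGroup_le_AutT_and_selfSimilar [NeZero p] (e : ZMod p → ZMod p) :
    ggsGroup p e ≤ AutT (ZMod p) ∧ SelfSimilar (ggsGroup p e) := by
  refine closure_le_AutT_and_selfSimilar ?_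
  rintro _ (rfl | rfl)
  · refine ⟨rotPerm_mem_AutT 1, fun u => ?_⟩
    cases u with
    | nil => rw [sect_nil (rotPerm_mem_AutT 1)]; exact rotPerm_mem_ggsGroup e 1
    | cons x w => rw [sect_rotPerm_cons]; exact one_mem _
  · exact ⟨ggsB_mem_AutT e, sect_ggsB_mem_ggsGroup e⟩

lemma mem_AutT_of_mem_ggsGroup [NeZero p] (hg : g ∈ ggsGroup p e) : g ∈ AutT (ZMod p) :=
  (ggsGroup_le_AutT_and_selfSimilar e).1 hg

lemma sect_mem_ggsGroup [NeZero p] (hg : g ∈ ggsGroup p e) (u : List (ZMod p)) :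
    sect g u ∈ ggsGroup p e :=
  (ggsGroup_le_AutT_and_selfSimilar e).2 g hg u

lemma exists_apply_singleton_eq_add (hg : g ∈ ggsGroup p e) :
    ∃ m : ZMod p, ∀ x, g [x] = [x + m] := by
  induction hg using Subgroup.closure_induction with
  | mem g hg =>
    rcases hg with rfl | rfl
    · exact ⟨1, fun x => rfl⟩
    · exact ⟨0, fun x => by rw [add_zero, ggsB_singleton]⟩
  | one => exact ⟨0, fun x => by rw [add_zero]; rfl⟩
  | mul f g _ _ hf hg =>
    obtain ⟨mf, hmf⟩ := hf
    obtain ⟨mg, hmg⟩ := hg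
    exact ⟨mg + mf, fun x => by rw [Perm.mul_apply, hmg, hmf, add_assoc]⟩
  | inv g _ hg =>
    obtain ⟨m, hm⟩ := hg
    refine ⟨-m, fun x => ?_⟩
    rw [Perm.inv_eq_iff_eq, hm, neg_add_cancel_right]

end GGSGroup

section Exponents

variable {p : ℕ} {e : ZMod p → ZMod p} {f g : Perm (List (ZMod p))}

def aExp (g : Perm (List (ZMod p))) : ZMod p := (g [0]).headD 0

lemma apply_singleton_eq_add_aExp (hg : g ∈ ggsGroup p e) (x : ZMod p) :
    g [x] = [x + aExp g] := by
  obtain ⟨m, hm⟩ := exists_apply_singleton_eq_add hg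
  rw [hm, aExp, hm, zero_add, List.headD_cons]

lemma aExp_eq_zero_of_apply_singleton (hg : g ∈ ggsGroup p e) {x : ZMod p} (hx : g [x] = [x]) :
    aExp g = 0 := by
  rw [apply_singleton_eq_add_aExp hg, List.cons.injEq] at hx
  exact add_eq_left.1 hx.1

lemma aExp_one : aExp (1 : Perm (List (ZMod p))) = 0 := rfl

lemma aExp_rotPerm (m : ZMod p) : aExp (rotPerm m) = m := zero_add m

lemma aExp_ggsB (e : ZMod p → ZMod p) : aExp (ggsB e) = 0 := by
  rw [aExp, ggsB_singleton, List.headD_cons]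

lemma aExp_mul (hf : f ∈ ggsGroup p e) (hg : g ∈ ggsGroup p e) :
    aExp (f * g) = aExp f + aExp g := by
  rw [aExp, Perm.mul_apply, apply_singleton_eq_add_aExp hg, apply_singleton_eq_add_aExp hf,
    List.headD_cons, zero_add, add_comm]

lemma aExp_inv (hg : g ∈ ggsGroup p e) : aExp g⁻¹ = -aExp g := by
  rw [eq_neg_iff_add_eq_zero, ← aExp_mul (inv_mem hg) hg, inv_mul_cancel, aExp_one]

variable [NeZero p]

/-- For the defining vector `(c, …, c)`, `c` times the exponent sum of `b` modulo `p`. -/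
noncomputable def bExp (g : Perm (List (ZMod p))) : ZMod p := -∑ x, aExp (sect g [x])

lemma bExp_one : bExp (1 : Perm (List (ZMod p))) = 0 := by
  simp [bExp, sect_one, aExp_one]

lemma bExp_rotPerm (m : ZMod p) : bExp (rotPerm m) = 0 := by
  simp [bExp, sect_rotPerm_cons, aExp_one]

lemma bExp_ggsB_const (c : ZMod p) : bExp (ggsB fun _ => c) = c := by
  have h : ∀ x : ZMod p, aExp (sect (ggsB fun _ => c) [x]) = c - if x = 0 then c else 0 := by
    intro x
    by_cases hx : x = 0
    · rw [hx, sect_ggsB_zero, aExp_ggsB, if_pos rfl, sub_self]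
    · rw [sect_ggsB_of_ne_zero _ hx, aExp_rotPerm, if_neg hx, sub_zero]
  simp [bExp, h, Finset.sum_sub_distrib]

lemma bExp_mul (hf : f ∈ ggsGroup p e) (hg : g ∈ ggsGroup p e) :
    bExp (f * g) = bExp f + bExp g := by
  have h : ∀ x, aExp (sect (f * g) [x]) = aExp (sect f [x + aExp g]) + aExp (sect g [x]) := by
    intro x
    rw [sect_mul (mem_AutT_of_mem_ggsGroup hf) (mem_AutT_of_mem_ggsGroup hg),
      apply_singleton_eq_add_aExp hg, aExp_mul (sect_mem_ggsGroup hf _) (sect_mem_ggsGroup hg _)]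
  have shift : ∑ x, aExp (sect f [x + aExp g]) = ∑ x, aExp (sect f [x]) :=
    Fintype.sum_equiv (Equiv.addRight (aExp g)) _ _ fun _ => rfl
  rw [bExp, bExp, bExp, Finset.sum_congr rfl fun x _ => h x, Finset.sum_add_distrib, shift,
    neg_add]

lemma bExp_inv (hg : g ∈ ggsGroup p e) : bExp g⁻¹ = -bExp g := by
  rw [eq_neg_iff_add_eq_zero, ← bExp_mul (inv_mem hg) hg, inv_mul_cancel, bExp_one]

end Exponents

section ConstantVector

variable {p : ℕ} [NeZero p] {c : ZMod p} {g : Perm (List (ZMod p))}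

lemma aExp_sect_add_bExp_sect (hg : g ∈ ggsGroup p fun _ => c) (x : ZMod p) :
    aExp (sect g [x]) + bExp (sect g [x]) = bExp g := by
  induction hg using Subgroup.closure_induction generalizing x with
  | mem g hg =>
    rcases hg with rfl | rfl
    · rw [sect_rotPerm_cons, aExp_one, bExp_one, bExp_rotPerm, add_zero]
    · by_cases hx : x = 0
      · rw [hx, sect_ggsB_zero, aExp_ggsB, zero_add]
      · rw [sect_ggsB_of_ne_zero _ hx, aExp_rotPerm, bExp_rotPerm, bExp_ggsB_const, add_zero]
  | one => rw [sect_one, aExp_one, bExp_one, add_zero]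
  | mul f g hf hg ihf ihg =>
    rw [sect_mul (mem_AutT_of_mem_ggsGroup hf) (mem_AutT_of_mem_ggsGroup hg),
      apply_singleton_eq_add_aExp hg, aExp_mul (sect_mem_ggsGroup hf _) (sect_mem_ggsGroup hg _),
      bExp_mul (sect_mem_ggsGroup hf _) (sect_mem_ggsGroup hg _), bExp_mul hf hg,
      ← ihf (x + aExp g), ← ihg x]
    ring
  | inv g hg ih =>
    rw [sect_inv (mem_AutT_of_mem_ggsGroup hg), apply_singleton_eq_add_aExp (inv_mem hg),
      aExp_inv (sect_mem_ggsGroup hg _), bExp_inv (sect_mem_ggsGroup hg _), bExp_inv hg,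
      ← ih, neg_add]

lemma aExp_add_bExp_sect_eq_zero_of_mem_stL_two (hg : g ∈ stL (ggsGroup p fun _ => c) 2)
    (x y : ZMod p) : aExp (sect g [x, y]) + bExp (sect g [x, y]) = 0 := by
  have hgG := hg.1
  have hfix := apply_singleton_of_fix_level_two (mem_AutT_of_mem_ggsGroup hgG)
    (fun x y => hg.2 [x, y] rfl)
  have haExp : ∀ x, aExp (sect g [x]) = 0 := fun x =>
    aExp_eq_zero_of_apply_singleton (sect_mem_ggsGroup hgG _) (hfix x 0).2
  have hbExp : bExp g = 0 := by simp [bExp, haExp]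
  have hbExp_sect : bExp (sect g [x]) = 0 := by
    simpa [haExp, hbExp] using aExp_sect_add_bExp_sect hgG x
  rw [← List.singleton_append, sect_append (mem_AutT_of_mem_ggsGroup hgG),
    aExp_sect_add_bExp_sect (sect_mem_ggsGroup hgG _), hbExp_sect]

theorem ggsGroup_const_not_superStronglyFractal (hc : c ≠ 0) :
    ¬ SuperStronglyFractal (ggsGroup p fun _ => c) := by
  intro h
  have hb : ggsB (fun _ => c) ∈ (ggsGroup p fun _ => c : Set (Perm (List (ZMod p)))) :=
    ggsB_mem_ggsGroup _
  rw [← h 2 [0, 0] rfl] at hb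
  obtain ⟨g, hg, hb⟩ := hb
  have := aExp_add_bExp_sect_eq_zero_of_mem_stL_two hg 0 0
  rw [show sect g [0, 0] = ggsB fun _ => c from hb, aExp_ggsB, bExp_ggsB_const, zero_add] at this
  exact hc this

end ConstantVector

section StrongFractality

variable {p : ℕ}

lemma conj_ggsB_mem_stL_one [NeZero p] (e : ZMod p → ZMod p) (k : ZMod p) :
    rotPerm k * ggsB e * (rotPerm k)⁻¹ ∈ stL (ggsGroup p e) 1 := by
  refine ⟨mul_mem (mul_mem (rotPerm_mem_ggsGroup e k) (ggsB_mem_ggsGroup e))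
    (inv_mem (rotPerm_mem_ggsGroup e k)), fun u hu => ?_⟩
  obtain ⟨x, rfl⟩ := List.length_eq_one_iff.1 hu
  simp [rotPerm_inv, ggsB_singleton]

lemma sect_conj_ggsB (e : ZMod p → ZMod p) (k x : ZMod p) :
    sect (rotPerm k * ggsB e * (rotPerm k)⁻¹) [x] = sect (ggsB e) [x - k] := by
  rw [rotPerm_inv, sect_mul (mul_mem (rotPerm_mem_AutT k) (ggsB_mem_AutT e)) (rotPerm_mem_AutT _),
    sect_mul (rotPerm_mem_AutT k) (ggsB_mem_AutT e), rotPerm_cons, ggsB_singleton,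
    sect_rotPerm_cons, sect_rotPerm_cons, one_mul, mul_one, sub_eq_add_neg]

theorem ggsGroup_stronglyFractal [Fact p.Prime] {e : ZMod p → ZMod p}
    (he : ∃ i, i ≠ 0 ∧ e i ≠ 0) : StronglyFractal (ggsGroup p e) := by
  obtain ⟨hA, hss⟩ := ggsGroup_le_AutT_and_selfSimilar e
  refine stronglyFractal_closure hA hss fun x => ?_
  have mem_image : ∀ k, sect (ggsB e) [x - k] ∈
      (fun g => sect g [x]) '' (stL (ggsGroup p e) 1 : Set (Perm (List (ZMod p)))) :=
    fun k => ⟨_, conj_ggsB_mem_stL_one e k, sect_conj_ggsB e k x⟩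
  obtain ⟨i, hi, hei⟩ := he
  rintro _ (rfl | rfl)
  · have hai := Subgroup.subset_closure (mem_image (x - i))
    rw [sub_sub_cancel, sect_ggsB_of_ne_zero e hi] at hai
    -- `a = (a ^ e_i) ^ (e_i⁻¹)`
    have := pow_mem hai (e i)⁻¹.val
    rwa [rotPerm_pow, nsmul_eq_mul, ZMod.natCast_zmod_val, inv_mul_cancel₀ hei] at this
  · have hb := Subgroup.subset_closure (mem_image x)
    rwa [sub_self, sect_ggsB_zero] at hb

end StrongFractality

/-- The GGS-group with constant defining vector `e = (1, …, 1)` is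
strongly fractal but not super strongly fractal. -/
theorem ggsGroup_constant_not_superStronglyFractal (p : ℕ) [Fact p.Prime] :
    StronglyFractal (ggsGroup p (fun _ => 1)) ∧
      ¬ SuperStronglyFractal (ggsGroup p (fun _ => 1)) :=
  ⟨ggsGroup_stronglyFractal ⟨1, one_ne_zero, one_ne_zero⟩,
    ggsGroup_const_not_superStronglyFractal one_ne_zero⟩

end TreeFract
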